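/- arXiv:2206.06227 — 2 statements merged into one kernel-verified Lean document; each statement's English description precedes it below -/
import Mathlib

section
/- Let (Ω,F,ℙ) be a probability space and d ≥ 1. For each n ∈ ℕ let Z_n and Z̄_n be ℝ^d-valued random variables with laws q_n and q̄_n respectively, let p_n be a probability measure on ℝ^d, let B_n ⊆ ℝ^d be Borel sets, and let D_n, δ_n ≥ 0 be such that for every n: (1) almost surely, if Z̄_k ∉ B_k for all 0 ≤ k ≤ n−1, then Z_n = Z̄_n; (2) χ²(q̄_n‖p_n) ≤ D_n²; (3) p_n(B_n) ≤ δ_n. Then for every n, TV(q_n, q̄_n) ≤ Σ_{k=0}^{n−1} (D_k²+1)^{1/2} δ_k^{1/2}, and TV(p_n, q_n) ≤ D_n + Σ_{k=0}^{n−1} (D_k²+1)^{1/2} δ_k^{1/2}. -/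
open MeasureTheory ProbabilityTheory Real
open scoped ENNReal NNReal RealInnerProductSpace

noncomputable section

/-- `ℝ^d` as a Euclidean space. -/
abbrev Euc (d : ℕ) := EuclideanSpace ℝ (Fin d)

variable {d : ℕ}

/-- The measure on `ℝ^d` with Lebesgue density `p`. -/
def densMeasure (p : Euc d → ℝ) : Measure (Euc d) :=
  volume.withDensity fun x => ENNReal.ofReal (p x)

/-- `p` is a probability density on `ℝ^d`. -/
def IsDensity (p : Euc d → ℝ) : Prop :=
  (∀ x, 0 ≤ p x) ∧ (∫ x, p x = 1)

/-- χ²-divergence between measures: `∫ (dq/dp)² dp − 1` if `q ≪ p`, and `+∞` otherwise. -/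
def chiSq (q p : Measure (Euc d)) : ℝ≥0∞ :=
  @ite _ (q ≪ p) (Classical.propDecidable _) ((∫⁻ x, (q.rnDeriv p x) ^ 2 ∂p) - 1) ⊤

/-- Total variation distance between measures. -/
def TVdist (μ ν : Measure (Euc d)) : ℝ :=
  ⨆ A : { A : Set (Euc d) // MeasurableSet A }, |(μ A.1).toReal - (ν A.1).toReal|

/-- KL divergence between densities. -/
def KLdiv (q p : Euc d → ℝ) : ℝ :=
  ∫ x, q x * Real.log (q x / p x)

/-- The score function `∇ ln p` of a density `p`. -/
def score (p : Euc d → ℝ) : Euc d → Euc d :=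
  fun x => gradient (fun y => Real.log (p y)) x

/-- `ln p` is `C¹` and `L`-smooth, i.e. `∇ ln p` is `L`-Lipschitz. -/
def LSmooth (p : Euc d → ℝ) (L : ℝ) : Prop :=
  ContDiff ℝ 1 (fun x => Real.log (p x)) ∧ LipschitzWith (Real.toNNReal L) (score p)

/-- `p` satisfies a log-Sobolev inequality with constant `C`. -/
def LogSobolevIneq (p : Euc d → ℝ) (C : ℝ) : Prop :=
  ∀ q : Euc d → ℝ, IsDensity q →
    KLdiv q p ≤ C / 2 * ∫ x, ‖gradient (fun y => Real.log (q y / p y)) x‖ ^ 2 * q x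

/-- The standard Gaussian `N(0, I_d)` on `ℝ^d`. -/
def stdGaussian (d : ℕ) : Measure (Euc d) :=
  (Measure.pi fun _ : Fin d => gaussianReal 0 1).map
    (fun x => (EuclideanSpace.equiv (Fin d) ℝ).symm x)

/-- One step of Langevin Monte Carlo with score estimate `s` and step size `h`:
the law of `X + h·s(X) + √(2h)·ξ`, `X ∼ q`, `ξ ∼ N(0, I_d)` independent. -/
def lmcStep (s : Euc d → Euc d) (h : ℝ) (q : Measure (Euc d)) : Measure (Euc d) :=
  (q.prod (stdGaussian d)).map fun z => z.1 + h • s z.1 + Real.sqrt (2 * h) • z.2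

/-- The `n`-th iterate of LMC with score estimate `s`, step size `h`, started from `q0`. -/
def lmcIter (s : Euc d → Euc d) (h : ℝ) (q0 : Measure (Euc d)) : ℕ → Measure (Euc d)
  | 0 => q0
  | n + 1 => lmcStep s h (lmcIter s h q0 n)

/-- The density of `N(0, σ² I_d)` on `ℝ^d`. -/
def gaussDensity (σ2 : ℝ) : Euc d → ℝ :=
  fun x => (2 * Real.pi * σ2) ^ (-(d : ℝ) / 2) * Real.exp (-‖x‖ ^ 2 / (2 * σ2))

/-- Convolution of a density `p` with the Gaussian density `φ_{σ²}` (equal to `p` if `σ² = 0`). -/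
def conv (p : Euc d → ℝ) (σ2 : ℝ) : Euc d → ℝ :=
  if σ2 = 0 then p else fun x => ∫ y, p y * gaussDensity σ2 (x - y)

/-- The density of `αX` where `X` has density `p` (for `α > 0`). -/
def scaleDensity (α : ℝ) (p : Euc d → ℝ) : Euc d → ℝ :=
  fun x => α ^ (-(d : ℝ)) * p (α⁻¹ • x)

/-- The density of the DDPM forward marginal (with `g ≡ 1`) at time `t`:
the law of `e^{−t/2}X + √(1−e^{−t})·ξ`, `X ∼ p`, `ξ ∼ N(0,I_d)` independent. -/
def ddpmDensity (p : Euc d → ℝ) (t : ℝ) : Euc d → ℝ :=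
  conv (scaleDensity (Real.exp (-t / 2)) p) (1 - Real.exp (-t))

/-- The DDPM predictor chain with score estimates `s(·,t)`, horizon `T` and step size `h`:
`q₀ = N(0,(1−e^{−T})I_d)`, and `q_{(k+1)h}` is the law of
`(1+h/2)Z + h·s(Z, T−kh) + √h·ξ`, `Z ∼ q_{kh}`, `ξ ∼ N(0,I_d)` independent. -/
def ddpmChain (s : ℝ → Euc d → Euc d) (T h : ℝ) : ℕ → Measure (Euc d)
  | 0 => (stdGaussian d).map fun x => Real.sqrt (1 - Real.exp (-T)) • x
  | k + 1 =>
      ((ddpmChain s T h k).prod (stdGaussian d)).map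
        fun z => (1 + h / 2) • z.1 + h • s (T - k * h) z.1 + Real.sqrt h • z.2

/-- The SMLD predictor chain with score estimates `s(·,t)`, horizon `T` and step size `h`:
`q₀ = N(0, T·I_d)`, and `q_{(k+1)h}` is the law of
`Z + h·s(Z, T−kh) + √h·ξ`, `Z ∼ q_{kh}`, `ξ ∼ N(0,I_d)` independent. -/
def smldChain (s : ℝ → Euc d → Euc d) (T h : ℝ) : ℕ → Measure (Euc d)
  | 0 => (stdGaussian d).map fun x => Real.sqrt T • x
  | k + 1 =>
      ((smldChain s T h k).prod (stdGaussian d)).map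
        fun z => z.1 + h • s (T - k * h) z.1 + Real.sqrt h • z.2

/-!
Off the event `E = ⋃_{k<n} {Z̄ₖ ∈ Bₖ}` the two chains agree, so `TV(qₙ, q̄ₙ) ≤ ℙ(E)`. Writing
`q̄ₖ = fₖ · pₖ`, Cauchy–Schwarz gives `q̄ₖ(Bₖ) = ∫_{Bₖ} fₖ dpₖ ≤ ‖fₖ‖_{L²(pₖ)} pₖ(Bₖ)^{1/2}`
with `‖fₖ‖² = χ²(q̄ₖ‖pₖ) + 1`, and a union bound yields the first estimate. The second follows
from the triangle inequality and `|q(A) - p(A)| ≤ ∫ |f - 1| dp ≤ χ²(q‖p)^{1/2}`.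
-/

theorem ENNReal.tsub_one_sq_add_one_tsub_sq_add_two_mul (x : ℝ≥0∞) :
    (x - 1) ^ 2 + (1 - x) ^ 2 + 2 * x = x ^ 2 + 1 := by
  rcases eq_or_ne x ⊤ with rfl | hx
  · simp [ENNReal.top_pow]
  lift x to ℝ≥0 using hx
  norm_cast
  apply NNReal.coe_injective
  rcases le_total x 1 with h | h <;> push_cast [tsub_eq_zero_of_le h, NNReal.coe_sub h] <;> ring

theorem ENNReal.ofReal_rpow_half (x : ℝ) : ENNReal.ofReal x ^ (1 / 2 : ℝ) = ENNReal.ofReal √x := by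
  rcases le_total 0 x with hx | hx
  · rw [ENNReal.ofReal_rpow_of_nonneg hx (by norm_num), Real.sqrt_eq_rpow]
  · simp [ENNReal.ofReal_of_nonpos hx, Real.sqrt_eq_zero'.mpr hx]

section CauchySchwarz

variable {α : Type*} [MeasurableSpace α] (μ : Measure α) {g : α → ℝ≥0∞}

theorem setLIntegral_le_sqrt_lintegral_sq_mul_sqrt_measure (hg : AEMeasurable g μ) (s : Set α) :
    ∫⁻ x in s, g x ∂μ ≤ (∫⁻ x, g x ^ 2 ∂μ) ^ (1 / 2 : ℝ) * μ s ^ (1 / 2 : ℝ) := by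
  have holder := ENNReal.lintegral_mul_le_Lp_mul_Lq (μ.restrict s) Real.HolderConjugate.two_two
    hg.restrict (aemeasurable_const (b := (1 : ℝ≥0∞)))
  simp only [Pi.mul_apply, mul_one, ENNReal.rpow_two, lintegral_const,
    Measure.restrict_apply_univ, one_pow, one_mul] at holder
  refine holder.trans ?_
  gcongr
  exact Measure.restrict_le_self

theorem setLIntegral_le_sqrt_lintegral_sq [IsProbabilityMeasure μ] (hg : AEMeasurable g μ)
    (s : Set α) : ∫⁻ x in s, g x ∂μ ≤ (∫⁻ x, g x ^ 2 ∂μ) ^ (1 / 2 : ℝ) := by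
  refine (setLIntegral_le_sqrt_lintegral_sq_mul_sqrt_measure μ hg s).trans ?_
  calc _ ≤ (∫⁻ x, g x ^ 2 ∂μ) ^ (1 / 2 : ℝ) * 1 ^ (1 / 2 : ℝ) := by gcongr; exact prob_le_one
    _ = _ := by rw [ENNReal.one_rpow, mul_one]

end CauchySchwarz

theorem measure_preimage_le_add_of_ae_eq_off {Ω α : Type*} [MeasurableSpace Ω]
    {P : Measure Ω} {X Y : Ω → α} {E : Set Ω} (h : ∀ᵐ ω ∂P, ω ∉ E → X ω = Y ω) (s : Set α) :
    P (X ⁻¹' s) ≤ P (Y ⁻¹' s) + P E := by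
  have hsub : X ⁻¹' s ≤ᵐ[P] (Y ⁻¹' s ∪ E : Set Ω) := by
    filter_upwards [h] with ω hω hXs
    by_cases hE : ω ∈ E
    · exact Or.inr hE
    · exact Or.inl (by rwa [Set.mem_preimage, ← hω hE])
  exact (measure_mono_ae hsub).trans (measure_union_le _ _)

section ChiSquare

variable {q p : Measure (Euc d)}

theorem absolutelyContinuous_of_chiSq_ne_top (h : chiSq q p ≠ ⊤) : q ≪ p := by
  by_contra hqp
  exact h (by rw [chiSq, if_neg hqp])

theorem lintegral_rnDeriv_sq_le_chiSq_add_one :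
    ∫⁻ x, q.rnDeriv p x ^ 2 ∂p ≤ chiSq q p + 1 := by
  by_cases hqp : q ≪ p
  · rw [chiSq, if_pos hqp]
    exact le_tsub_add
  · simp [chiSq, if_neg hqp]

variable [IsProbabilityMeasure q] [IsProbabilityMeasure p]

-- In `ℝ≥0∞`, `f - 1` and `1 - f` are the positive and negative parts of the real `f - 1`,
-- so the right-hand side is `∫ (f - 1)² dp`.
theorem chiSq_eq_lintegral_tsub_sq (hqp : q ≪ p) :
    chiSq q p = ∫⁻ x, (q.rnDeriv p x - 1) ^ 2 ∂p + ∫⁻ x, (1 - q.rnDeriv p x) ^ 2 ∂p := by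
  have := Measure.haveLebesgueDecomposition_of_sigmaFinite q p
  have hf : Measurable (q.rnDeriv p) := Measure.measurable_rnDeriv q p
  have hmass : ∫⁻ x, q.rnDeriv p x ∂p = 1 := by
    rw [Measure.lintegral_rnDeriv hqp, measure_univ]
  have hint := congrArg (fun g => ∫⁻ x, g x ∂p)
    (funext fun x => ENNReal.tsub_one_sq_add_one_tsub_sq_add_two_mul (q.rnDeriv p x))
  simp only at hint
  rw [lintegral_add_right _ (by fun_prop), lintegral_add_right _ (by fun_prop),
    lintegral_add_right _ (by fun_prop), lintegral_const_mul _ hf, hmass, lintegral_const,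
    measure_univ, mul_one, mul_one] at hint
  rw [chiSq, if_pos hqp]
  refine (ENNReal.eq_sub_of_add_eq ENNReal.one_ne_top
    ((ENNReal.add_left_inj ENNReal.one_ne_top).mp ?_)).symm
  rw [← hint]
  ring

theorem measure_le_add_sqrt_chiSq (s : Set (Euc d)) :
    q s ≤ p s + chiSq q p ^ (1 / 2 : ℝ) ∧ p s ≤ q s + chiSq q p ^ (1 / 2 : ℝ) := by
  by_cases hqp : q ≪ p
  swap
  · simp [chiSq, if_neg hqp, ENNReal.top_rpow_of_pos]
  have := Measure.haveLebesgueDecomposition_of_sigmaFinite q p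
  set f := q.rnDeriv p
  have hf : Measurable f := Measure.measurable_rnDeriv q p
  have hq : q s = ∫⁻ x in s, f x ∂p := (Measure.setLIntegral_rnDeriv hqp s).symm
  have hp : p s = ∫⁻ x in s, 1 ∂p := (setLIntegral_one s).symm
  have hchi := chiSq_eq_lintegral_tsub_sq hqp
  constructor
  · calc q s ≤ ∫⁻ x in s, (1 + (f x - 1)) ∂p := hq ▸ lintegral_mono fun x => le_add_tsub
      _ = p s + ∫⁻ x in s, (f x - 1) ∂p := by rw [lintegral_add_left measurable_const, hp]
      _ ≤ p s + (∫⁻ x, (f x - 1) ^ 2 ∂p) ^ (1 / 2 : ℝ) := by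
        gcongr; exact setLIntegral_le_sqrt_lintegral_sq p (by fun_prop) s
      _ ≤ p s + chiSq q p ^ (1 / 2 : ℝ) := by rw [hchi]; gcongr; exact le_self_add
  · calc p s ≤ ∫⁻ x in s, (f x + (1 - f x)) ∂p := hp ▸ lintegral_mono fun x => le_add_tsub
      _ = q s + ∫⁻ x in s, (1 - f x) ∂p := by rw [lintegral_add_left hf, hq]
      _ ≤ q s + (∫⁻ x, (1 - f x) ^ 2 ∂p) ^ (1 / 2 : ℝ) := by
        gcongr; exact setLIntegral_le_sqrt_lintegral_sq p (by fun_prop) s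
      _ ≤ q s + chiSq q p ^ (1 / 2 : ℝ) := by rw [hchi]; gcongr; exact le_add_self

end ChiSquare

theorem measure_le_sqrt_chiSq_add_one_mul_sqrt {q p : Measure (Euc d)} [SigmaFinite q]
    [SigmaFinite p] (hqp : q ≪ p) (s : Set (Euc d)) :
    q s ≤ (chiSq q p + 1) ^ (1 / 2 : ℝ) * p s ^ (1 / 2 : ℝ) := by
  have := Measure.haveLebesgueDecomposition_of_sigmaFinite q p
  rw [← Measure.setLIntegral_rnDeriv hqp s]
  refine (setLIntegral_le_sqrt_lintegral_sq_mul_sqrt_measure p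
    (Measure.measurable_rnDeriv q p).aemeasurable s).trans ?_
  gcongr
  exact lintegral_rnDeriv_sq_le_chiSq_add_one

theorem measure_le_sqrt_mul_sqrt_of_chiSq_le {q p : Measure (Euc d)} [SigmaFinite q]
    [SigmaFinite p] {D δ : ℝ} (hchi : chiSq q p ≤ ENNReal.ofReal (D ^ 2)) {s : Set (Euc d)}
    (hs : p s ≤ ENNReal.ofReal δ) : q s ≤ ENNReal.ofReal (√(D ^ 2 + 1) * √δ) := by
  have hqp := absolutelyContinuous_of_chiSq_ne_top (ne_top_of_le_ne_top ENNReal.ofReal_ne_top hchi)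
  refine (measure_le_sqrt_chiSq_add_one_mul_sqrt hqp s).trans ?_
  rw [ENNReal.ofReal_mul (Real.sqrt_nonneg _), ← ENNReal.ofReal_rpow_half,
    ← ENNReal.ofReal_rpow_half, ENNReal.ofReal_add (sq_nonneg _) zero_le_one, ENNReal.ofReal_one]
  gcongr

theorem TVdist_comm (μ ν : Measure (Euc d)) : TVdist μ ν = TVdist ν μ := by
  simp only [TVdist, abs_sub_comm]

section TotalVariation

variable {μ ν ρ : Measure (Euc d)} [IsFiniteMeasure μ] [IsFiniteMeasure ν]

theorem abs_measure_sub_le_TVdist {s : Set (Euc d)} (hs : MeasurableSet s) :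
    |(μ s).toReal - (ν s).toReal| ≤ TVdist μ ν := by
  refine le_ciSup (f := fun A : { A : Set (Euc d) // MeasurableSet A } =>
    |(μ A.1).toReal - (ν A.1).toReal|) ⟨(μ .univ).toReal + (ν .univ).toReal, ?_⟩ ⟨s, hs⟩
  rintro _ ⟨A, rfl⟩
  have hμ := ENNReal.toReal_mono (measure_ne_top μ _) (measure_mono (Set.subset_univ A.1))
  have hν := ENNReal.toReal_mono (measure_ne_top ν _) (measure_mono (Set.subset_univ A.1))
  rw [abs_sub_le_iff]
  constructor <;> linarith [(μ A.1).toReal_nonneg, (ν A.1).toReal_nonneg]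

theorem TVdist_triangle [IsFiniteMeasure ρ] : TVdist μ ρ ≤ TVdist μ ν + TVdist ν ρ := by
  refine Real.iSup_le (fun ⟨s, hs⟩ => ?_) (add_nonneg ?_ ?_)
  · exact (abs_sub_le _ _ _).trans
      (add_le_add (abs_measure_sub_le_TVdist hs) (abs_measure_sub_le_TVdist hs))
  all_goals exact Real.iSup_nonneg fun _ => abs_nonneg _

theorem TVdist_le_of_forall_le_add {c : ℝ} (hc : 0 ≤ c)
    (h : ∀ s, MeasurableSet s → μ s ≤ ν s + ENNReal.ofReal c ∧ ν s ≤ μ s + ENNReal.ofReal c) :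
    TVdist μ ν ≤ c := by
  refine Real.iSup_le (fun ⟨s, hs⟩ => ?_) hc
  have hμν := ENNReal.toReal_le_add (h s hs).1 (measure_ne_top _ _) ENNReal.ofReal_ne_top
  have hνμ := ENNReal.toReal_le_add (h s hs).2 (measure_ne_top _ _) ENNReal.ofReal_ne_top
  rw [ENNReal.toReal_ofReal hc] at hμν hνμ
  exact abs_sub_le_iff.mpr ⟨by linarith, by linarith⟩

end TotalVariation

theorem TVdist_le_of_chiSq_le {q p : Measure (Euc d)} [IsProbabilityMeasure q]
    [IsProbabilityMeasure p] {D : ℝ} (hD : 0 ≤ D) (h : chiSq q p ≤ ENNReal.ofReal (D ^ 2)) :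
    TVdist q p ≤ D := by
  have hsqrt : chiSq q p ^ (1 / 2 : ℝ) ≤ ENNReal.ofReal D := by
    calc _ ≤ ENNReal.ofReal (D ^ 2) ^ (1 / 2 : ℝ) := by gcongr
      _ = ENNReal.ofReal D := by rw [ENNReal.ofReal_rpow_half, Real.sqrt_sq hD]
  refine TVdist_le_of_forall_le_add hD fun s _ => ?_
  obtain ⟨hqs, hps⟩ := measure_le_add_sqrt_chiSq (q := q) (p := p) s
  exact ⟨hqs.trans (by gcongr), hps.trans (by gcongr)⟩

theorem TVdist_map_le_of_ae_eq_off {Ω : Type*} [MeasurableSpace Ω] {P : Measure Ω}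
    [IsFiniteMeasure P] {X Y : Ω → Euc d} (hX : AEMeasurable X P) (hY : AEMeasurable Y P)
    {E : Set Ω} (h : ∀ᵐ ω ∂P, ω ∉ E → X ω = Y ω) :
    TVdist (P.map X) (P.map Y) ≤ (P E).toReal := by
  refine TVdist_le_of_forall_le_add ENNReal.toReal_nonneg fun s hs => ?_
  rw [ENNReal.ofReal_toReal (measure_ne_top _ _), Measure.map_apply_of_aemeasurable hX hs,
    Measure.map_apply_of_aemeasurable hY hs]
  exact ⟨measure_preimage_le_add_of_ae_eq_off h s,
    measure_preimage_le_add_of_ae_eq_off (h.mono fun ω hω hE => (hω hE).symm) s⟩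

theorem framework_bad_set_general
    {d : ℕ}
    {Ω : Type*} [MeasureSpace Ω] [IsProbabilityMeasure (ℙ : Measure Ω)]
    (Z Zbar : ℕ → Ω → Euc d)
    (hZ : ∀ n, Measurable (Z n)) (hZbar : ∀ n, Measurable (Zbar n))
    (p : ℕ → Measure (Euc d)) (hp : ∀ n, IsProbabilityMeasure (p n))
    (B : ℕ → Set (Euc d))
    (D δ : ℕ → ℝ) (hD : ∀ n, 0 ≤ D n)
    (hcouple : ∀ n, ∀ᵐ ω ∂ℙ, (∀ k < n, Zbar k ω ∉ B k) → Z n ω = Zbar n ω)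
    (hchi : ∀ n, chiSq (Measure.map (Zbar n) ℙ) (p n) ≤ ENNReal.ofReal (D n ^ 2))
    (hbad : ∀ n, p n (B n) ≤ ENNReal.ofReal (δ n)) :
    ∀ n : ℕ,
      TVdist (Measure.map (Z n) ℙ) (Measure.map (Zbar n) ℙ) ≤
        ∑ k ∈ Finset.range n, Real.sqrt (D k ^ 2 + 1) * Real.sqrt (δ k) ∧
      TVdist (p n) (Measure.map (Z n) ℙ) ≤
        D n + ∑ k ∈ Finset.range n, Real.sqrt (D k ^ 2 + 1) * Real.sqrt (δ k) := by
  intro n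
  have hZbar_prob k : IsProbabilityMeasure (Measure.map (Zbar k) ℙ) :=
    Measure.isProbabilityMeasure_map (hZbar k).aemeasurable
  have hZ_prob : IsProbabilityMeasure (Measure.map (Z n) ℙ) :=
    Measure.isProbabilityMeasure_map (hZ n).aemeasurable
  set S := ∑ k ∈ Finset.range n, √(D k ^ 2 + 1) * √(δ k)
  set E := ⋃ k ∈ Finset.range n, Zbar k ⁻¹' B k
  have hE : ℙ E ≤ ENNReal.ofReal S := by
    rw [ENNReal.ofReal_sum_of_nonneg fun k _ => by positivity]
    refine (measure_biUnion_finset_le _ _).trans (Finset.sum_le_sum fun k _ => ?_)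
    exact (Measure.le_map_apply (hZbar k).aemeasurable _).trans
      (measure_le_sqrt_mul_sqrt_of_chiSq_le (hchi k) (hbad k))
  have hcoupling : TVdist (Measure.map (Z n) ℙ) (Measure.map (Zbar n) ℙ) ≤ S :=
    (TVdist_map_le_of_ae_eq_off (hZ n).aemeasurable (hZbar n).aemeasurable
      ((hcouple n).mono fun ω hω hωE => hω fun k hk hB =>
        hωE (Set.mem_biUnion (Finset.mem_range.mpr hk) hB))).trans
      (ENNReal.toReal_le_of_le_ofReal (by positivity) hE)
  refine ⟨hcoupling,
    (TVdist_triangle (ν := Measure.map (Zbar n) ℙ)).trans (add_le_add ?_ ?_)⟩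
  · exact (TVdist_comm _ _).trans_le (TVdist_le_of_chiSq_le (hD n) (hchi n))
  · exact (TVdist_comm _ _).trans_le hcoupling

/-- Framework theorem: converting an `L²` guarantee to TV bounds via a bad set. -/
theorem framework_bad_set
    {d : ℕ} (hd : 1 ≤ d)
    {Ω : Type*} [MeasureSpace Ω] [IsProbabilityMeasure (ℙ : Measure Ω)]
    (Z Zbar : ℕ → Ω → Euc d)
    (hZ : ∀ n, Measurable (Z n)) (hZbar : ∀ n, Measurable (Zbar n))
    (p : ℕ → Measure (Euc d)) (hp : ∀ n, IsProbabilityMeasure (p n))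
    (B : ℕ → Set (Euc d)) (hB : ∀ n, MeasurableSet (B n))
    (D δ : ℕ → ℝ) (hD : ∀ n, 0 ≤ D n) (hδ : ∀ n, 0 ≤ δ n)
    (hcouple : ∀ n, ∀ᵐ ω ∂ℙ, (∀ k < n, Zbar k ω ∉ B k) → Z n ω = Zbar n ω)
    (hchi : ∀ n, chiSq (Measure.map (Zbar n) ℙ) (p n) ≤ ENNReal.ofReal (D n ^ 2))
    (hbad : ∀ n, p n (B n) ≤ ENNReal.ofReal (δ n)) :
    ∀ n : ℕ,
      TVdist (Measure.map (Z n) ℙ) (Measure.map (Zbar n) ℙ) ≤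
        ∑ k ∈ Finset.range n, Real.sqrt (D k ^ 2 + 1) * Real.sqrt (δ k) ∧
      TVdist (p n) (Measure.map (Z n) ℙ) ≤
        D n + ∑ k ∈ Finset.range n, Real.sqrt (D k ^ 2 + 1) * Real.sqrt (δ k) :=
  framework_bad_set_general Z Zbar hZ hZbar p hp B D δ hD hcouple hchi hbad
end
end

section
/- Let p(x) ∝ e^{−V(x)} be a probability density on ℝ^d where V is C¹ and ∇V is L-Lipschitz. Then for any probability density q on ℝ^d such that q/p is C¹ and the integrals below are finite: ∫ ‖∇V(x)‖² q(x) dx ≤ ∫ ‖∇ ln(q(x)/p(x))‖² q(x) dx + 2·d·L. -/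
open MeasureTheory ProbabilityTheory Real
open scoped ENNReal NNReal RealInnerProductSpace

noncomputable section

variable {d : ℕ}

/-!
Write `G = log (q / p)`. Since `∇ log p = -∇V`, one has `∇q = q (∇G - ∇V)`, and expanding
`q ‖∇G - ∇V‖² ≥ 0` gives pointwise `‖∇V‖² q ≤ ‖∇G‖² q - 2 ⟪∇V, ∇q⟫`. The cross term is an
integration by parts that needs no second derivative of `V`: for an `L`-Lipschitz `w` and a vector
`e`, `∫ w ∂ₑq` is the derivative at `0` of `t ↦ ∫ w(x) q(x + t e) dx = ∫ w(x - t e) q(x) dx`,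
which is `L ‖e‖ ‖q‖₁`-Lipschitz in `t`, so `|∫ w ∂ₑq| ≤ L ‖e‖ ‖q‖₁`. Summing over an orthonormal
basis gives `-∫ ⟪∇V, ∇q⟫ ≤ d L`. If `L < 0`, the Lipschitz constant `L.toNNReal` is `0`, so `∇V`
is constant, and then `e^{-V}` is integrable only in dimension `0`.
-/

lemma integral_exp_neg_pos {α : Type*} [TopologicalSpace α] [MeasurableSpace α] [Nonempty α]
    {μ : Measure α} [μ.IsOpenPosMeasure] {V : α → ℝ}
    (hV : Integrable (fun x => exp (-V x)) μ) : 0 < ∫ x, exp (-V x) ∂μ := by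
  rw [integral_pos_iff_support_of_nonneg (fun x => (exp_pos _).le) hV]
  simpa [Function.support, (exp_pos _).ne'] using isOpen_univ.measure_pos μ Set.univ_nonempty

lemma Integrable.mul_mul_of_sq_mul {α : Type*} [MeasurableSpace α] {μ : Measure α}
    {f g q : α → ℝ} (hq0 : ∀ x, 0 ≤ q x) (hf : AEStronglyMeasurable f μ)
    (hg : AEStronglyMeasurable g μ) (hq : AEStronglyMeasurable q μ)
    (hfq : Integrable (fun x => f x ^ 2 * q x) μ) (hgq : Integrable (fun x => g x ^ 2 * q x) μ) :
    Integrable (fun x => f x * g x * q x) μ :=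
  (hfq.add hgq).mono' ((hf.mul hg).mul hq) (Filter.Eventually.of_forall fun x => by
    rw [norm_mul, norm_mul, Real.norm_eq_abs, Real.norm_eq_abs, Real.norm_eq_abs,
      abs_of_nonneg (hq0 x)]
    have hfg : |f x| * |g x| ≤ f x ^ 2 + g x ^ 2 := by
      nlinarith [two_mul_le_add_sq |f x| |g x|, sq_abs (f x), sq_abs (g x),
        mul_nonneg (abs_nonneg (f x)) (abs_nonneg (g x))]
    simpa only [Pi.add_apply, add_mul] using mul_le_mul_of_nonneg_right hfg (hq0 x))

section Translation

variable {E : Type*} [NormedAddCommGroup E] [MeasurableSpace E] [BorelSpace E]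
  {μ : Measure E} {w v : E → ℝ} {K : ℝ≥0}

lemma LipschitzWith.integrable_comp_sub_mul (hw : LipschitzWith K w) (hv : Integrable v μ)
    (hwv : Integrable (fun x => w x * v x) μ) (a : E) :
    Integrable (fun x => w (x - a) * v x) μ := by
  refine (hwv.norm.add (hv.norm.const_mul (K * ‖a‖))).mono'
    ((hw.continuous.comp (continuous_sub_right a)).aestronglyMeasurable.mul hv.1) ?_
  refine Filter.Eventually.of_forall fun x => ?_
  have hshift : |w (x - a)| ≤ |w x| + K * ‖a‖ := by
    have := hw.dist_le_mul (x - a) x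
    rw [Real.dist_eq, dist_eq_norm, sub_sub_cancel_left, norm_neg] at this
    linarith [abs_sub_abs_le_abs_sub (w (x - a)) (w x)]
  simp only [norm_mul, Real.norm_eq_abs, Pi.add_apply]
  nlinarith [abs_nonneg (v x)]

variable [μ.IsAddRightInvariant]

lemma integral_mul_comp_add (w v : E → ℝ) (a : E) :
    ∫ x, w x * v (x + a) ∂μ = ∫ x, w (x - a) * v x ∂μ := by
  rw [← integral_add_right_eq_self (fun x => w (x - a) * v x) a]
  simp

lemma LipschitzWith.integrable_mul_comp_add (hw : LipschitzWith K w) (hv : Integrable v μ)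
    (hwv : Integrable (fun x => w x * v x) μ) (a : E) :
    Integrable (fun x => w x * v (x + a)) μ := by
  simpa using (hw.integrable_comp_sub_mul hv hwv a).comp_add_right a

lemma LipschitzWith.dist_integral_mul_comp_add_le (hw : LipschitzWith K w)
    (hv : Integrable v μ) (hwv : Integrable (fun x => w x * v x) μ) (a b : E) :
    dist (∫ x, w x * v (x + a) ∂μ) (∫ x, w x * v (x + b) ∂μ) ≤
      K * dist a b * ∫ x, |v x| ∂μ := by
  rw [integral_mul_comp_add, integral_mul_comp_add, dist_eq_norm,
    ← integral_sub (hw.integrable_comp_sub_mul hv hwv a) (hw.integrable_comp_sub_mul hv hwv b),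
    ← integral_const_mul]
  refine norm_integral_le_of_norm_le (hv.abs.const_mul _) (Filter.Eventually.of_forall fun x => ?_)
  have := hw.dist_le_mul (x - a) (x - b)
  rw [dist_sub_left, Real.dist_eq] at this
  rw [← sub_mul, norm_mul, Real.norm_eq_abs, Real.norm_eq_abs]
  exact mul_le_mul_of_nonneg_right this (abs_nonneg _)

variable [NormedSpace ℝ E]

lemma LipschitzWith.lipschitzWith_integral_mul_comp_add_smul (hw : LipschitzWith K w)
    (hv : Integrable v μ) (hwv : Integrable (fun x => w x * v x) μ) (e : E) :
    LipschitzWith (Real.toNNReal (K * ‖e‖ * ∫ x, |v x| ∂μ))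
      (fun s : ℝ => ∫ x, w x * v (x + s • e) ∂μ) := by
  refine LipschitzWith.of_dist_le' fun s s' => ?_
  have hd : dist (s • e) (s' • e) = ‖e‖ * dist s s' := by
    rw [dist_eq_norm, ← sub_smul, norm_smul, Real.dist_eq, Real.norm_eq_abs, mul_comm]
  calc _ ≤ K * dist (s • e) (s' • e) * ∫ x, |v x| ∂μ :=
        hw.dist_integral_mul_comp_add_le hv hwv _ _
    _ = _ := by rw [hd]; ring

variable [SFinite μ] {q : E → ℝ} {e : E}

lemma LipschitzWith.integral_mul_comp_add_smul_sub (hw : LipschitzWith K w)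
    (hq : Differentiable ℝ q) (hu : Continuous fun x => fderiv ℝ q x e)
    (hui : Integrable (fun x => fderiv ℝ q x e) μ)
    (hwu : Integrable (fun x => w x * fderiv ℝ q x e) μ) (t : ℝ) :
    ∫ x, w x * (q (x + t • e) - q x) ∂μ =
      ∫ s in 0..t, ∫ x, w x * fderiv ℝ q (x + s • e) e ∂μ := by
  have ftc : ∀ x, q (x + t • e) - q x = ∫ s in 0..t, fderiv ℝ q (x + s • e) e := by
    intro x
    have hline : ∀ s : ℝ,
        HasDerivAt (fun s : ℝ => q (x + s • e)) (fderiv ℝ q (x + s • e) e) s := by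
      intro s
      have hl : HasDerivAt (fun s : ℝ => x + s • e) e s := by
        simpa using ((hasDerivAt_id s).smul_const e).const_add x
      exact (hq _).hasFDerivAt.comp_hasDerivAt s hl
    rw [intervalIntegral.integral_eq_sub_of_hasDerivAt (fun s _ => hline s)
      ((hu.comp (by fun_prop)).intervalIntegrable _ _)]
    simp
  have hprod : Integrable (Function.uncurry fun x (s : ℝ) => w x * fderiv ℝ q (x + s • e) e)
      (μ.prod (volume.restrict (Set.uIoc 0 t))) := by
    refine (integrable_prod_iff' (Continuous.aestronglyMeasurable
      ((hw.continuous.comp continuous_fst).mul (hu.comp (by fun_prop))))).2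
      ⟨Filter.Eventually.of_forall fun s => hw.integrable_mul_comp_add hui hwu (s • e), ?_⟩
    have hnorm := (lipschitzWith_one_norm.comp hw).lipschitzWith_integral_mul_comp_add_smul
      (μ := μ) hui.norm (by simpa [norm_mul] using hwu.norm) e
    simpa [norm_mul, IntegrableOn] using hnorm.continuous.integrableOn_uIoc
  simp_rw [ftc, ← intervalIntegral.integral_const_mul,
    intervalIntegral.intervalIntegral_eq_integral_uIoc]
  rw [integral_smul, integral_integral_swap hprod]

theorem LipschitzWith.abs_integral_mul_fderiv_apply_le (hw : LipschitzWith K w)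
    (hq : Differentiable ℝ q) (hu : Continuous fun x => fderiv ℝ q x e) (hqi : Integrable q μ)
    (hwq : Integrable (fun x => w x * q x) μ) (hui : Integrable (fun x => fderiv ℝ q x e) μ)
    (hwu : Integrable (fun x => w x * fderiv ℝ q x e) μ) :
    |∫ x, w x * fderiv ℝ q x e ∂μ| ≤ K * ‖e‖ * ∫ x, |q x| ∂μ := by
  set F : ℝ → ℝ := fun t => ∫ x, w x * q (x + t • e) ∂μ
  set H : ℝ → ℝ := fun s => ∫ x, w x * fderiv ℝ q (x + s • e) e ∂μ
  have hF : F = fun t => F 0 + ∫ s in 0..t, H s := by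
    funext t
    rw [← hw.integral_mul_comp_add_smul_sub hq hu hui hwu]
    simp only [F, mul_sub, zero_smul, add_zero]
    rw [integral_sub (hw.integrable_mul_comp_add hqi hwq _) hwq]
    ring
  have hderiv : HasDerivAt F (H 0) 0 := by
    rw [hF]
    exact ((hw.lipschitzWith_integral_mul_comp_add_smul hui hwu e).continuous
      |>.integral_hasStrictDerivAt 0 0).hasDerivAt.const_add _
  have hbound := hderiv.le_of_lipschitz (hw.lipschitzWith_integral_mul_comp_add_smul hqi hwq e)
  rw [Real.coe_toNNReal _ (by positivity)] at hbound
  simpa [H] using hbound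

end Translation

section Gradient

open InnerProductSpace Module

variable {E : Type*} [NormedAddCommGroup E] [InnerProductSpace ℝ E]

lemma norm_sq_mul_le_norm_sq_mul_sub_inner (a b : E) {t : ℝ} (ht : 0 ≤ t) :
    ‖a‖ ^ 2 * t ≤ ‖b‖ ^ 2 * t - 2 * ⟪a, t • (b - a)⟫ := by
  have hsq := norm_sub_sq_real b a
  rw [real_inner_smul_right, inner_sub_right, real_inner_self_eq_norm_sq, real_inner_comm]
  nlinarith [mul_nonneg ht (sq_nonneg ‖b - a‖)]

variable [CompleteSpace E]

lemma ContDiff.continuous_gradient {f : E → ℝ} (hf : ContDiff ℝ 1 f) :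
    Continuous (gradient f) :=
  (toDual ℝ E).symm.continuous.comp (hf.continuous_fderiv one_ne_zero)

lemma measurable_gradient [MeasurableSpace E] [BorelSpace E] (f : E → ℝ) :
    Measurable (gradient f) :=
  (toDual ℝ E).symm.continuous.measurable.comp (measurable_fderiv ℝ f)

lemma gradient_eq_smul_gradient_log_div_add {q p : E → ℝ} {x : E} (hq0 : ∀ y, 0 ≤ q y)
    (hp : ∀ y, 0 < p y) (hpx : DifferentiableAt ℝ p x)
    (hrx : DifferentiableAt ℝ (fun y => q y / p y) x) :
    gradient q x =
      q x • (gradient (fun y => log (q y / p y)) x + gradient (fun y => log (p y)) x) := by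
  suffices fderiv ℝ q x =
      q x • (fderiv ℝ (fun y => log (q y / p y)) x + fderiv ℝ (fun y => log (p y)) x) by
    simp only [gradient, this, map_smul, map_add]
  rcases (hq0 x).eq_or_lt with hqx | hqx
  · rw [← hqx, zero_smul]
    exact IsLocalMin.fderiv_eq_zero (Filter.Eventually.of_forall fun y => hqx ▸ hq0 y)
  have hrx0 : 0 < q x / p x := div_pos hqx (hp x)
  have hqd : HasFDerivAt q
      ((q x / p x) • fderiv ℝ p x + p x • fderiv ℝ (fun y => q y / p y) x) x :=
    (hrx.hasFDerivAt.mul hpx.hasFDerivAt).congr_of_eventuallyEq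
      (Filter.Eventually.of_forall fun y => (div_mul_cancel₀ _ (hp y).ne').symm)
  rw [hqd.fderiv, (hrx.hasFDerivAt.log hrx0.ne').fderiv, (hpx.hasFDerivAt.log (hp x).ne').fderiv]
  have := (hp x).ne'
  ext v
  simp only [add_apply, smul_apply, smul_eq_mul]
  field_simp
  ring

lemma gradient_log_exp_neg_div (V : E → ℝ) {Z : ℝ} (hZ : Z ≠ 0) (x : E) :
    gradient (fun y => log (exp (-V y) / Z)) x = -gradient V x := by
  have : (fun y => log (exp (-V y) / Z)) = fun y => -V y - log Z :=
    funext fun y => by rw [log_div (exp_pos _).ne' hZ, log_exp]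
  simp only [this, gradient, fderiv_sub_const, fderiv_fun_neg, map_neg]

lemma eq_add_inner_of_gradient_eq {V : E → ℝ} {c : E} (hV : Differentiable ℝ V)
    (hc : ∀ x, gradient V x = c) (x : E) : V x = V 0 + ⟪c, x⟫ := by
  have hd : Differentiable ℝ fun y => V y - ⟪c, y⟫ := hV.sub (innerSL ℝ c).differentiable
  have hz : ∀ y, fderiv ℝ (fun y => V y - ⟪c, y⟫) y = 0 := fun y => by
    have h : HasFDerivAt (fun y => V y - ⟪c, y⟫) (fderiv ℝ V y - innerSL ℝ c) y :=
      (hV y).hasFDerivAt.fun_sub (innerSL ℝ c).hasFDerivAt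
    ext v
    rw [h.fderiv, sub_apply, innerSL_apply_apply, ← hc y, gradient,
      toDual_symm_apply, sub_self, zero_apply]
  have := is_const_of_fderiv_eq_zero hd hz x 0
  simp only [inner_zero_right, sub_zero] at this
  linarith

variable [FiniteDimensional ℝ E] [MeasurableSpace E] [BorelSpace E]

lemma not_integrable_exp_neg_of_gradient_eq [Nontrivial E] (μ : Measure E) [μ.IsAddHaarMeasure]
    {V : E → ℝ} {c : E} (hV : Differentiable ℝ V) (hc : ∀ x, gradient V x = c) :
    ¬Integrable (fun x => exp (-V x)) μ := by
  intro hint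
  have hZ := integral_exp_neg_pos hint
  have hc0 : c = 0 := by
    have hshift : ∫ x, exp (-V (x + c)) ∂μ = exp (-‖c‖ ^ 2) * ∫ x, exp (-V x) ∂μ := by
      rw [← integral_const_mul]
      congr 1
      funext x
      rw [eq_add_inner_of_gradient_eq hV hc (x + c), eq_add_inner_of_gradient_eq hV hc x,
        inner_add_right, real_inner_self_eq_norm_sq, ← exp_add]
      ring_nf
    rw [integral_add_right_eq_self (fun x => exp (-V x)) c] at hshift
    have hexp : exp (-‖c‖ ^ 2) = 1 :=
      mul_right_cancel₀ hZ.ne' (hshift.symm.trans (one_mul _).symm)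
    simpa using hexp
  have hconst : (fun x => exp (-V x)) = fun _ => exp (-V 0) := funext fun x => by
    rw [eq_add_inner_of_gradient_eq hV hc x, hc0, inner_zero_left, add_zero]
  rw [hconst, integrable_const_iff] at hint
  rcases hint with h | h
  · exact (exp_pos _).ne' h
  · exact (measure_lt_top μ Set.univ).ne (measure_univ_of_isAddLeftInvariant μ)

variable {μ : Measure E} [μ.IsAddRightInvariant] [SFinite μ] {K : ℝ≥0}

theorem LipschitzWith.neg_le_integral_inner_gradient {V q : E → ℝ}
    (hV : LipschitzWith K (gradient V)) (hq : ContDiff ℝ 1 q) (hqi : Integrable q μ)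
    (hVq : Integrable (fun x => ‖gradient V x‖ * q x) μ)
    (hgq : Integrable (fun x => ‖gradient q x‖) μ)
    (hVgq : Integrable (fun x => ‖gradient V x‖ * ‖gradient q x‖) μ) :
    -(finrank ℝ E * K * ∫ x, |q x| ∂μ) ≤ ∫ x, ⟪gradient V x, gradient q x⟫ ∂μ := by
  set b := stdOrthonormalBasis ℝ E
  have hfderiv : ∀ x i, fderiv ℝ q x (b i) = ⟪b i, gradient q x⟫ := fun x i => by
    rw [real_inner_comm]
    exact toDual_symm_apply.symm
  have hcoord_le : ∀ (a : E) i, |⟪b i, a⟫| ≤ ‖a‖ := fun a i => by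
    simpa [b.orthonormal.norm_eq_one] using abs_real_inner_le_norm (b i) a
  have hsum : ∀ x, ⟪gradient V x, gradient q x⟫ =
      ∑ i, ⟪b i, gradient V x⟫ * fderiv ℝ q x (b i) := fun x => by
    rw [← b.sum_inner_mul_inner]
    refine Finset.sum_congr rfl fun i _ => ?_
    rw [hfderiv, real_inner_comm (b i)]
  have hu : ∀ i, Continuous fun x => fderiv ℝ q x (b i) := fun i => by
    simp_rw [hfderiv]
    exact continuous_const.inner hq.continuous_gradient
  have hw_cont : ∀ i, Continuous fun x => ⟪b i, gradient V x⟫ := fun i =>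
    continuous_const.inner hV.continuous
  have hui : ∀ i, Integrable (fun x => fderiv ℝ q x (b i)) μ := fun i =>
    hgq.mono' (hu i).aestronglyMeasurable (Filter.Eventually.of_forall fun x => by
      rw [Real.norm_eq_abs, hfderiv]
      exact hcoord_le _ i)
  have hwq : ∀ i, Integrable (fun x => ⟪b i, gradient V x⟫ * q x) μ := fun i =>
    hVq.norm.mono' ((hw_cont i).aestronglyMeasurable.mul hqi.1)
      (Filter.Eventually.of_forall fun x => by
        simpa [norm_mul] using
          mul_le_mul_of_nonneg_right (hcoord_le (gradient V x) i) (abs_nonneg (q x)))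
  have hwu : ∀ i, Integrable (fun x => ⟪b i, gradient V x⟫ * fderiv ℝ q x (b i)) μ := fun i =>
    hVgq.mono' ((hw_cont i).mul (hu i)).aestronglyMeasurable
      (Filter.Eventually.of_forall fun x => by
        rw [norm_mul, Real.norm_eq_abs, Real.norm_eq_abs, hfderiv]
        exact mul_le_mul (hcoord_le _ i) (hcoord_le _ i) (abs_nonneg _) (norm_nonneg _))
  have hterm : ∀ i,
      -(K * ∫ x, |q x| ∂μ) ≤ ∫ x, ⟪b i, gradient V x⟫ * fderiv ℝ q x (b i) ∂μ := by
    intro i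
    have hnorm : ‖innerSL ℝ (b i)‖₊ = 1 := by
      ext; simp [innerSL_apply_norm, b.orthonormal.norm_eq_one]
    have hw : LipschitzWith K fun x => ⟪b i, gradient V x⟫ := by
      have := (innerSL ℝ (b i)).lipschitz.comp hV
      rwa [hnorm, one_mul] at this
    have := hw.abs_integral_mul_fderiv_apply_le (hq.differentiable one_ne_zero) (hu i) hqi
      (hwq i) (hui i) (hwu i)
    rw [b.orthonormal.norm_eq_one, mul_one] at this
    exact (neg_le_neg this).trans (neg_abs_le _)
  rw [integral_congr_ae (Filter.Eventually.of_forall hsum), integral_finsetSum _ fun i _ => hwu i]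
  calc -(finrank ℝ E * K * ∫ x, |q x| ∂μ)
      = ∑ _i : Fin (finrank ℝ E), -(K * ∫ x, |q x| ∂μ) := by
        simp only [Finset.sum_const, Finset.card_univ, Fintype.card_fin, nsmul_eq_mul]; ring
    _ ≤ _ := Finset.sum_le_sum fun i _ => hterm i

theorem LipschitzWith.integral_norm_sq_gradient_le {V G q : E → ℝ}
    (hV : LipschitzWith K (gradient V)) (hq : ContDiff ℝ 1 q) (hq0 : ∀ x, 0 ≤ q x)
    (hqi : Integrable q μ) (hgrad : ∀ x, gradient q x = q x • (gradient G x - gradient V x))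
    (hVq : Integrable (fun x => ‖gradient V x‖ ^ 2 * q x) μ)
    (hGq : Integrable (fun x => ‖gradient G x‖ ^ 2 * q x) μ) :
    ∫ x, ‖gradient V x‖ ^ 2 * q x ∂μ ≤
      ∫ x, ‖gradient G x‖ ^ 2 * q x ∂μ + 2 * finrank ℝ E * K * ∫ x, q x ∂μ := by
  have hVm := hV.continuous.norm.aestronglyMeasurable (μ := μ)
  have hGm := (measurable_gradient G).norm.aestronglyMeasurable (μ := μ)
  have hqm := hq.continuous.aestronglyMeasurable (μ := μ)
  have hgqm := hq.continuous_gradient.norm.aestronglyMeasurable (μ := μ)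
  have hone : Integrable (fun x => (1 : ℝ) ^ 2 * q x) μ := by simpa using hqi
  have hVq1 : Integrable (fun x => ‖gradient V x‖ * q x) μ := by
    simpa using Integrable.mul_mul_of_sq_mul hq0 hVm aestronglyMeasurable_const hqm hVq hone
  have hGq1 : Integrable (fun x => ‖gradient G x‖ * q x) μ := by
    simpa using Integrable.mul_mul_of_sq_mul hq0 hGm aestronglyMeasurable_const hqm hGq hone
  have hgq_le : ∀ x, ‖gradient q x‖ ≤ ‖gradient G x‖ * q x + ‖gradient V x‖ * q x := fun x => by
    rw [hgrad, norm_smul, Real.norm_eq_abs, abs_of_nonneg (hq0 x), ← add_mul, mul_comm]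
    exact mul_le_mul_of_nonneg_right (_root_.norm_sub_le _ _) (hq0 x)
  have hgq : Integrable (fun x => ‖gradient q x‖) μ :=
    (hGq1.add hVq1).mono' hgqm (Filter.Eventually.of_forall fun x => by simpa using hgq_le x)
  have hVgq : Integrable (fun x => ‖gradient V x‖ * ‖gradient q x‖) μ :=
    ((Integrable.mul_mul_of_sq_mul hq0 hVm hGm hqm hVq hGq).add
      (Integrable.mul_mul_of_sq_mul hq0 hVm hVm hqm hVq hVq)).mono' (hVm.mul hgqm)
      (Filter.Eventually.of_forall fun x => by
        rw [norm_mul, norm_norm, norm_norm, Pi.add_apply, mul_assoc, mul_assoc, ← mul_add]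
        exact mul_le_mul_of_nonneg_left (hgq_le x) (norm_nonneg _))
  have hinner : Integrable (fun x => ⟪gradient V x, gradient q x⟫) μ :=
    hVgq.mono' (hV.continuous.inner hq.continuous_gradient).aestronglyMeasurable
      (Filter.Eventually.of_forall fun x => abs_real_inner_le_norm _ _)
  have hibp := hV.neg_le_integral_inner_gradient hq hqi hVq1 hgq hVgq
  rw [integral_congr_ae (Filter.Eventually.of_forall fun x => abs_of_nonneg (hq0 x))] at hibp
  calc ∫ x, ‖gradient V x‖ ^ 2 * q x ∂μ
      ≤ ∫ x, (‖gradient G x‖ ^ 2 * q x - 2 * ⟪gradient V x, gradient q x⟫) ∂μ :=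
        integral_mono hVq (hGq.sub (hinner.const_mul 2)) fun x => by
          simpa only [hgrad] using norm_sq_mul_le_norm_sq_mul_sub_inner _ _ (hq0 x)
    _ = ∫ x, ‖gradient G x‖ ^ 2 * q x ∂μ - 2 * ∫ x, ⟪gradient V x, gradient q x⟫ ∂μ := by
        rw [integral_sub hGq (hinner.const_mul 2), integral_const_mul]
    _ ≤ _ := by linarith

end Gradient

/-- Change-of-measure bound for the squared gradient of the potential. -/
theorem grad_potential_change_of_measure
    {d : ℕ} (V : Euc d → ℝ) (L : ℝ) (hV : ContDiff ℝ 1 V)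
    (hLip : LipschitzWith (Real.toNNReal L) (gradient V))
    (hVint : Integrable fun x => Real.exp (-V x))
    (p : Euc d → ℝ) (hpdef : p = fun x => Real.exp (-V x) / ∫ y, Real.exp (-V y))
    (q : Euc d → ℝ) (hq : IsDensity q)
    (hC1 : ContDiff ℝ 1 fun x => q x / p x)
    (h1 : Integrable fun x => ‖gradient V x‖ ^ 2 * q x)
    (h2 : Integrable fun x => ‖gradient (fun y => Real.log (q y / p y)) x‖ ^ 2 * q x) :
    (∫ x, ‖gradient V x‖ ^ 2 * q x) ≤
      (∫ x, ‖gradient (fun y => Real.log (q y / p y)) x‖ ^ 2 * q x) + 2 * d * L := by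
  obtain ⟨hq0, hq1⟩ := hq
  have hqi : Integrable q := .of_integral_ne_zero (by rw [hq1]; exact one_ne_zero)
  have hZ := integral_exp_neg_pos hVint
  have hp : ∀ x, 0 < p x := fun x => hpdef ▸ div_pos (exp_pos _) hZ
  have hpC1 : ContDiff ℝ 1 p := hpdef ▸ hV.neg.exp.div_const _
  have hqC1 : ContDiff ℝ 1 q := by
    have hq_eq : (fun x => q x / p x * p x) = q := funext fun x => div_mul_cancel₀ _ (hp x).ne'
    exact hq_eq ▸ hC1.mul hpC1
  have hgrad : ∀ x, gradient q x =
      q x • (gradient (fun y => log (q y / p y)) x - gradient V x) := fun x => by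
    have hlogp : gradient (fun y => log (p y)) x = -gradient V x := by
      rw [hpdef]; exact gradient_log_exp_neg_div V hZ.ne' x
    rw [gradient_eq_smul_gradient_log_div_add hq0 hp (hpC1.differentiable one_ne_zero x)
      (hC1.differentiable one_ne_zero x), hlogp, sub_eq_add_neg]
  have key := hLip.integral_norm_sq_gradient_le hqC1 hq0 hqi hgrad h1 h2
  rw [hq1, mul_one, finrank_euclideanSpace_fin] at key
  rcases le_or_gt 0 L with hL | hL
  · rwa [Real.coe_toNNReal _ hL] at key
  rcases Nat.eq_zero_or_pos d with rfl | hd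
  · simpa using key
  have : Nontrivial (Euc d) :=
    Module.nontrivial_of_finrank_pos (by rwa [finrank_euclideanSpace_fin])
  rw [Real.toNNReal_of_nonpos hL.le, LipschitzWith.zero_iff] at hLip
  exact absurd hVint
    (not_integrable_exp_neg_of_gradient_eq volume (hV.differentiable one_ne_zero) (hLip · 0))
end
end
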